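/- Let V be a nonzero finite-dimensional ℂ-linear subspace of ℂ[z₁,…,zₙ], and let A(V) := { v(s) : s ∈ V, s ≠ 0 }. Then there exists a family (s_α)_{α ∈ A(V)} of elements of V which is a basis of V and such that each s_α has the form s_α = z^α + ∑_β a_β z^β, where the sum runs only over exponents β with α <lex β and β ∉ A(V). -/

import Mathlib

/-- `α <lex β`: at the smallest index `i` with `α i ≠ β i` one has `α i < β i`. -/
def LexLt {n : ℕ} (α β : Fin n →₀ ℕ) : Prop :=
  ∃ i : Fin n, (∀ j : Fin n, j < i → α j = β j) ∧ α i < β i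

/-- `m` is the lexicographically smallest element of the finite set `S` of exponents. -/
def IsLexMin {n : ℕ} (S : Finset (Fin n →₀ ℕ)) (m : Fin n →₀ ℕ) : Prop :=
  m ∈ S ∧ ∀ m' ∈ S, m' ≠ m → LexLt m m'

/-!
Write `A(V)` as `lexMinExponents V`. Restricting coefficients to the exponents in `A(V)` is
injective on `V`, since every nonzero `s ∈ V` has a nonzero coefficient at `v(s) ∈ A(V)`.
Conversely, elements of `V` with pairwise distinct lowest exponents are linearly independent, so
`|A(V)| ≤ dim V`. Hence the restriction map `V → ℂ^{A(V)}` is an isomorphism, and the preimages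
`s_α` of the standard basis vectors form the required basis: the lowest exponent of `s_α` lies in
`A(V)` and carries a nonzero coefficient, so it must be `α`, and `s_α` has no other exponent in
`A(V)`.
-/

open MvPolynomial

variable {n : ℕ}

theorem lexLt_iff_toLex_lt {α β : Fin n →₀ ℕ} : LexLt α β ↔ toLex α < toLex β :=
  Finsupp.Lex.lt_iff.symm

section CommSemiring

variable {R : Type*} [CommSemiring R]

theorem isLexMin_support_iff {p : MvPolynomial (Fin n) R} {m : Fin n →₀ ℕ} :
    IsLexMin p.support m ↔ coeff m p ≠ 0 ∧ ∀ β, coeff β p ≠ 0 → toLex m ≤ toLex β := by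
  simp only [IsLexMin, mem_support_iff, lexLt_iff_toLex_lt]
  refine and_congr_right fun _ => forall₂_congr fun β _ => ?_
  rw [le_iff_lt_or_eq, ← toLex.injective.eq_iff, eq_comm]
  tauto

theorem exists_isLexMin_support {p : MvPolynomial (Fin n) R} (hp : p ≠ 0) :
    ∃ m, IsLexMin p.support m := by
  obtain ⟨m, hm, hmin⟩ := p.support.exists_min_image toLex (support_nonempty.mpr hp)
  exact ⟨m, isLexMin_support_iff.mpr
    ⟨mem_support_iff.mp hm, fun β hβ => hmin β (mem_support_iff.mpr hβ)⟩⟩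

def lexMinExponents (V : Submodule R (MvPolynomial (Fin n) R)) : Set (Fin n →₀ ℕ) :=
  {m | ∃ s ∈ V, s ≠ 0 ∧ IsLexMin s.support m}

variable (V : Submodule R (MvPolynomial (Fin n) R))

noncomputable def lexMinCoeffs : V →ₗ[R] (lexMinExponents V → R) :=
  LinearMap.pi fun α => (lcoeff R α.1).comp V.subtype

variable {V}

theorem lexLt_and_notMem_of_lexMinCoeffs_eq_single {s : V} {α : lexMinExponents V}
    (hs : lexMinCoeffs V s = Pi.single α 1) (β : Fin n →₀ ℕ) (hβα : β ≠ α)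
    (hβ : coeff β s.1 ≠ 0) : LexLt α β ∧ β ∉ lexMinExponents V := by
  have hcoeff (γ : lexMinExponents V) : coeff γ.1 s.1 = (Pi.single α 1 : _ → R) γ :=
    congrFun hs γ
  have hs0 : s.1 ≠ 0 := fun h => hβ (by simp [h])
  obtain ⟨m, hm⟩ := exists_isLexMin_support hs0
  have hmα : m = α := by
    by_contra hmα
    have := hcoeff ⟨m, s.1, s.2, hs0, hm⟩
    rw [Pi.single_eq_of_ne (Subtype.coe_ne_coe.mp hmα)] at this
    exact (isLexMin_support_iff.mp hm).1 this
  subst hmα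
  refine ⟨hm.2 β (mem_support_iff.mpr hβ) hβα, fun hβA => hβ ?_⟩
  rw [hcoeff ⟨β, hβA⟩, Pi.single_eq_of_ne (Subtype.coe_ne_coe.mp hβα)]

end CommSemiring

theorem lexMinCoeffs_injective {R : Type*} [CommRing R]
    (V : Submodule R (MvPolynomial (Fin n) R)) : Function.Injective (lexMinCoeffs V) := by
  refine (injective_iff_map_eq_zero _).mpr fun s hs => ?_
  by_contra hs0
  have hs0' : s.1 ≠ 0 := by simpa using hs0
  obtain ⟨m, hm⟩ := exists_isLexMin_support hs0'
  exact (isLexMin_support_iff.mp hm).1 (congrFun hs ⟨m, s.1, s.2, hs0', hm⟩)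

theorem linearIndependent_of_isLexMin {R ι : Type*} [CommRing R] [NoZeroDivisors R]
    {p : ι → MvPolynomial (Fin n) R} {v : ι → Fin n →₀ ℕ} (hv : Function.Injective v)
    (hmin : ∀ i, IsLexMin (p i).support (v i)) :
    LinearIndependent R p := by
  classical
  rw [linearIndependent_iff']
  intro s g hsum i hi
  by_contra hgi
  obtain ⟨a, ha, hamin⟩ := (s.filter (g · ≠ 0)).exists_min_image (toLex ∘ v)
    ⟨i, Finset.mem_filter.mpr ⟨hi, hgi⟩⟩
  rw [Finset.mem_filter] at ha
  have hterm : ∀ j ∈ s, j ≠ a → g j * coeff (v a) (p j) = 0 := by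
    intro j hj hja
    by_contra h
    obtain ⟨hgj, hcj⟩ := mul_ne_zero_iff.mp h
    have hja_le : toLex (v j) ≤ toLex (v a) := (isLexMin_support_iff.mp (hmin j)).2 _ hcj
    have haj_le : toLex (v a) ≤ toLex (v j) := hamin j (Finset.mem_filter.mpr ⟨hj, hgj⟩)
    exact hja (hv (toLex.injective (le_antisymm hja_le haj_le)))
  have hcoeff := congrArg (coeff (v a)) hsum
  simp only [coeff_sum, coeff_smul, smul_eq_mul, coeff_zero] at hcoeff
  rw [Finset.sum_eq_single_of_mem a ha.1 hterm] at hcoeff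
  exact mul_ne_zero ha.2 (isLexMin_support_iff.mp (hmin a)).1 hcoeff

section Field

variable {K : Type*} [Field K] (V : Submodule K (MvPolynomial (Fin n) K))

theorem exists_linearIndependent_lexMinExponents :
    ∃ s : lexMinExponents V → V, LinearIndependent K s := by
  choose s hsV _ hmin using
    fun α : lexMinExponents V => (α.2 : ∃ s ∈ V, s ≠ 0 ∧ IsLexMin s.support α)
  exact ⟨fun α => ⟨s α, hsV α⟩,
    .of_comp V.subtype (linearIndependent_of_isLexMin Subtype.val_injective hmin)⟩

variable [FiniteDimensional K V]

theorem finite_lexMinExponents : Finite (lexMinExponents V) :=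
  (exists_linearIndependent_lexMinExponents V).choose_spec.finite

theorem lexMinCoeffs_bijective : Function.Bijective (lexMinCoeffs V) := by
  obtain ⟨s, hs⟩ := exists_linearIndependent_lexMinExponents V
  have := hs.finite
  have := Fintype.ofFinite (lexMinExponents V)
  have hinj := lexMinCoeffs_injective V
  have hdim : Module.finrank K V = Module.finrank K (lexMinExponents V → K) := by
    rw [Module.finrank_fintype_fun_eq_card]
    refine le_antisymm ?_ hs.fintype_card_le_finrank
    exact (lexMinCoeffs V).finrank_le_finrank_of_injective hinj |>.trans_eq
      (Module.finrank_fintype_fun_eq_card K)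
  exact ⟨hinj, (LinearMap.injective_iff_surjective_of_finrank_eq_finrank hdim).mp hinj⟩

end Field

theorem stmt4_general (n : ℕ) (V : Submodule ℂ (MvPolynomial (Fin n) ℂ))
    (hV : FiniteDimensional ℂ V)
    (A : Set (Fin n →₀ ℕ))
    (hA : A = {m | ∃ s ∈ V, s ≠ 0 ∧ IsLexMin s.support m}) :
    ∃ b : Module.Basis A ℂ V,
      ∀ α : A,
        MvPolynomial.coeff (α : Fin n →₀ ℕ) ((b α : MvPolynomial (Fin n) ℂ)) = 1 ∧
        ∀ β : Fin n →₀ ℕ, β ≠ (α : Fin n →₀ ℕ) →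
          MvPolynomial.coeff β ((b α : MvPolynomial (Fin n) ℂ)) ≠ 0 →
            LexLt (α : Fin n →₀ ℕ) β ∧ β ∉ A := by
  obtain rfl : A = lexMinExponents V := hA
  have := finite_lexMinExponents V
  let e := LinearEquiv.ofBijective _ (lexMinCoeffs_bijective V)
  refine ⟨(Pi.basisFun ℂ _).map e.symm, fun α => ?_⟩
  have hb : lexMinCoeffs V (e.symm (Pi.single α 1)) = Pi.single α 1 := e.apply_symm_apply _
  simp only [Module.Basis.map_apply, Pi.basisFun_apply]
  exact ⟨(congrFun hb α).trans (Pi.single_eq_same α 1),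
    lexLt_and_notMem_of_lexMinCoeffs_eq_single hb⟩

theorem stmt4 (n : ℕ) (V : Submodule ℂ (MvPolynomial (Fin n) ℂ))
    (hV : FiniteDimensional ℂ V) (hV0 : V ≠ ⊥)
    (A : Set (Fin n →₀ ℕ))
    (hA : A = {m | ∃ s ∈ V, s ≠ 0 ∧ IsLexMin s.support m}) :
    ∃ b : Module.Basis A ℂ V,
      ∀ α : A,
        MvPolynomial.coeff (α : Fin n →₀ ℕ) ((b α : MvPolynomial (Fin n) ℂ)) = 1 ∧
        ∀ β : Fin n →₀ ℕ, β ≠ (α : Fin n →₀ ℕ) →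
          MvPolynomial.coeff β ((b α : MvPolynomial (Fin n) ℂ)) ≠ 0 →
            LexLt (α : Fin n →₀ ℕ) β ∧ β ∉ A :=
  stmt4_general n V hV A hA
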